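/- arXiv:0801.0254 — 2 statements merged into one kernel-verified Lean document; each statement's English description precedes it below -/
import Mathlib

section
/- If V is a finite set of points in k^n, then the quotient ring k[x_1,...,x_n]/I(V) is a finite-dimensional k-vector space of dimension equal to the cardinality of V. -/
/-!
Evaluating at the points of `V` is a `k`-algebra map `k[x₁, …, xₙ] → k^V` whose kernel is
`I(V)`. It is surjective: distinct points are separated by an affine-linear polynomial, and the
product of such separators is `1` at one point of `V` and `0` at all the others. Hence
`k[x]/I(V) ≃ k^V`, which has dimension `|V|`.
-/

/-- The ideal of polynomials vanishing at every point of `V ⊆ kⁿ`. -/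
def vanishingIdeal (k : Type*) [Field k] (n : ℕ) (V : Set (Fin n → k)) :
    Ideal (MvPolynomial (Fin n) k) where
  carrier := {f | ∀ a ∈ V, MvPolynomial.eval a f = 0}
  zero_mem' := by intro a _; simp
  add_mem' := by
    intro f g hf hg a ha
    simp [map_add, hf a ha, hg a ha]
  smul_mem' := by
    intro c f hf a ha
    simp [smul_eq_mul, hf a ha]

namespace MvPolynomial

variable {k σ : Type*} [Field k]

lemma exists_eval_eq_one_and_eval_eq_zero {v w : σ → k} (h : v ≠ w) :
    ∃ p : MvPolynomial σ k, eval v p = 1 ∧ eval w p = 0 := by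
  obtain ⟨i, hi⟩ := Function.ne_iff.mp h
  refine ⟨C (v i - w i)⁻¹ * (X i - C (w i)), ?_, by simp⟩
  simp [inv_mul_cancel₀ (sub_ne_zero.mpr hi)]

noncomputable def evalOn (V : Finset (σ → k)) : MvPolynomial σ k →ₐ[k] (V → k) :=
  AlgHom.pi fun v => aeval v.1

@[simp]
lemma evalOn_apply (V : Finset (σ → k)) (f : MvPolynomial σ k) (v : V) :
    evalOn V f v = eval v.1 f := by
  simp [evalOn]

open scoped Classical in
lemma exists_evalOn_eq_single (V : Finset (σ → k)) (v : V) :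
    ∃ p : MvPolynomial σ k, evalOn V p = Pi.single v 1 := by
  choose p hp_one hp_zero using fun (w : V) (hw : w ≠ v) =>
    exists_eval_eq_one_and_eval_eq_zero (Subtype.coe_ne_coe.mpr hw).symm
  refine ⟨∏ w : {w : V // w ≠ v}, p w w.2, ?_⟩
  funext u
  rw [map_prod, Finset.prod_apply]
  by_cases hu : u = v
  · subst hu
    simp [hp_one]
  · rw [Pi.single_eq_of_ne hu]
    exact Finset.prod_eq_zero (Finset.mem_univ ⟨u, hu⟩) (by simp [hp_zero])

lemma evalOn_surjective (V : Finset (σ → k)) : Function.Surjective (evalOn V) := by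
  classical
  choose p hp using exists_evalOn_eq_single V
  intro g
  refine ⟨∑ v, g v • p v, ?_⟩
  simp only [map_sum, map_smul, hp, ← Pi.single_smul', smul_eq_mul, mul_one,
    Finset.univ_sum_single]

end MvPolynomial

section

variable {k : Type*} [Field k]

lemma ker_evalOn {n : ℕ} (V : Finset (Fin n → k)) :
    RingHom.ker (MvPolynomial.evalOn V) = vanishingIdeal k n V := by
  ext f
  rw [RingHom.mem_ker]
  refine ⟨fun h a ha => ?_, fun h => ?_⟩
  · simpa using congrFun h ⟨a, ha⟩
  · ext v
    simpa using h v v.2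

noncomputable def quotientVanishingIdealAlgEquiv {n : ℕ} (V : Finset (Fin n → k)) :
    (MvPolynomial (Fin n) k ⧸ vanishingIdeal k n V) ≃ₐ[k] (V → k) :=
  (Ideal.quotientEquivAlgOfEq k (ker_evalOn V).symm).trans
    (Ideal.quotientKerAlgEquivOfSurjective (MvPolynomial.evalOn_surjective V))

end

theorem quotient_dimension_eq_card
    (k : Type*) [Field k] (n : ℕ) (V : Finset (Fin n → k)) :
    FiniteDimensional k
      (MvPolynomial (Fin n) k ⧸ vanishingIdeal k n (V : Set (Fin n → k))) ∧
    Module.finrank k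
      (MvPolynomial (Fin n) k ⧸ vanishingIdeal k n (V : Set (Fin n → k))) = V.card := by
  let e := (quotientVanishingIdealAlgEquiv V).toLinearEquiv
  refine ⟨Module.Finite.equiv e.symm, ?_⟩
  rw [e.finrank_eq, Module.finrank_fintype_fun_eq_card, Fintype.card_coe]
end

section
/- The evaluation map from k[x_1,...,x_n]/I(V) to the product ring k^V, induced by evaluating polynomials at the points of V, is a well-defined k-algebra isomorphism. -/
/-!
Evaluation at a point `p` is a `k`-algebra map `k[x₁, …, xₙ] → k`; its kernel is a maximal ideal
which determines it, so distinct points give distinct, hence pairwise comaximal, maximal ideals.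
For finite `V` the Chinese remainder theorem makes evaluation at all points of `V` surjective onto
`k^V`, and its kernel is `I(V)`.
-/

namespace AlgHom

variable {k R : Type*} [CommRing R]

theorem eq_of_ker_eq [CommRing k] [Algebra k R] {φ ψ : R →ₐ[k] k}
    (h : RingHom.ker φ = RingHom.ker ψ) : φ = ψ := by
  ext r
  have hr : r - algebraMap k R (φ r) ∈ RingHom.ker ψ := h ▸ by simp [RingHom.mem_ker]
  rw [RingHom.mem_ker, map_sub, AlgHom.commutes, sub_eq_zero] at hr
  exact hr.symm

theorem pi_surjective_of_injective [Field k] [Algebra k R] {ι : Type*} [_root_.Finite ι]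
    {φ : ι → R →ₐ[k] k} (hφ : Function.Injective φ) :
    Function.Surjective (AlgHom.pi φ) := by
  have hmax (i : ι) : (RingHom.ker (φ i)).IsMaximal :=
    RingHom.ker_isMaximal_of_surjective _ fun c ↦ ⟨algebraMap k R c, (φ i).commutes c⟩
  have hcoprime : Pairwise (Function.onFun IsCoprime fun i ↦ RingHom.ker (φ i)) :=
    fun i j hij ↦ Ideal.isCoprime_of_isMaximal fun h ↦ hij (hφ (eq_of_ker_eq h))
  intro v
  obtain ⟨r, hr⟩ := Ideal.exists_forall_sub_mem_ideal hcoprime (fun i ↦ algebraMap k R (v i))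
  refine ⟨r, funext fun i ↦ ?_⟩
  simpa [RingHom.mem_ker, sub_eq_zero] using hr i

end AlgHom

theorem evaluation_map_is_algebra_iso
    (k : Type*) [Field k] (n : ℕ) (V : Set (Fin n → k)) (hV : V.Finite) :
    ∃ e : (MvPolynomial (Fin n) k ⧸ vanishingIdeal k n V) ≃ₐ[k] (V → k),
      ∀ (f : MvPolynomial (Fin n) k) (p : V),
        e (Ideal.Quotient.mk (vanishingIdeal k n V) f) p =
          MvPolynomial.eval (p : Fin n → k) f := by
  have : Finite V := hV
  let eval : MvPolynomial (Fin n) k →ₐ[k] (V → k) := AlgHom.pi fun p ↦ MvPolynomial.aeval p.1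
  have heval (f : MvPolynomial (Fin n) k) (p : V) : eval f p = MvPolynomial.eval p.1 f :=
    congr_fun (MvPolynomial.aeval_eq_eval p.1) f
  have hsurj : Function.Surjective eval := AlgHom.pi_surjective_of_injective fun p q h ↦
    Subtype.ext <| funext fun i ↦ by simpa using DFunLike.congr_fun h (MvPolynomial.X i)
  have hker : vanishingIdeal k n V = RingHom.ker eval := by
    ext f
    simp only [RingHom.mem_ker, funext_iff, heval, Subtype.forall, Pi.zero_apply]
    rfl
  refine ⟨(Ideal.quotientEquivAlgOfEq k hker).trans (Ideal.quotientKerAlgEquivOfSurjective hsurj),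
    fun f p ↦ ?_⟩
  rw [AlgEquiv.trans_apply, Ideal.quotientEquivAlgOfEq_mk]
  exact heval f p
end
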